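/- Let f ∈ ℂ[x₁,x₂,x₃] be a homogeneous cubic defining a smooth plane cubic curve, i.e. the only common zero in ℂ³ of the three partial derivatives ∂f/∂x₁, ∂f/∂x₂, ∂f/∂x₃ is the origin. Let g = x₀x₄x₅ + f(x₁,x₂,x₃) ∈ ℂ[x₀,…,x₅] (the normal form of a cubic fourfold of type δ with closed orbit). Then the singular points of g are exactly the nonzero scalar multiples of the three coordinate vectors e₀ = (1,0,0,0,0,0), e₄ = (0,0,0,0,1,0), and e₅ = (0,0,0,0,0,1); i.e. g has exactly three singular points in ℙ⁵ and they are not collinear. -/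

import Mathlib

open MvPolynomial

/-- The normal form of a semistable cubic fourfold of type δ with closed orbit:
`x₀x₄x₅ + f(x₁,x₂,x₃)`, where `f` is a plane cubic placed in the variables
`x₁, x₂, x₃`. -/
noncomputable def typeDelta (f : MvPolynomial (Fin 3) ℂ) : MvPolynomial (Fin 6) ℂ :=
  X 0 * X 4 * X 5 + rename (fun i : Fin 3 => (⟨i.1 + 1, by omega⟩ : Fin 6)) f

/-- The embedding `Fin 3 → Fin 6` used in `typeDelta`. -/
def rho6 : Fin 3 → Fin 6 := fun i => ⟨i.1 + 1, by omega⟩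

lemma rho6_inj : Function.Injective rho6 := by
  intro a b h
  have : a.1 + 1 = b.1 + 1 := congrArg Fin.val h
  exact Fin.ext (by omega)

lemma typeDelta_eq (f : MvPolynomial (Fin 3) ℂ) :
    typeDelta f = X 0 * X 4 * X 5 + rename rho6 f := rfl

lemma pderiv_rename_rho6_zero (f : MvPolynomial (Fin 3) ℂ) (i : Fin 6)
    (hi : ∀ j : Fin 3, rho6 j ≠ i) : pderiv i (rename rho6 f) = 0 := by
  apply pderiv_eq_zero_of_notMem_vars
  intro h
  obtain ⟨j, -, hj⟩ := Finset.mem_image.1 (vars_rename rho6 f h)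
  exact hi j hj

lemma rho6_ne (j : Fin 3) (i : Fin 6) (hi : i.1 = 0 ∨ i.1 = 4 ∨ i.1 = 5) : rho6 j ≠ i := by
  intro h
  have := congrArg Fin.val h
  have hj := j.isLt
  simp only [rho6] at this
  omega

lemma pd0 (f : MvPolynomial (Fin 3) ℂ) :
    pderiv 0 (typeDelta f) = X 4 * X 5 := by
  rw [typeDelta_eq, map_add, pderiv_rename_rho6_zero f 0 (fun j => rho6_ne j 0 (by decide)),
    pderiv_mul, pderiv_mul, pderiv_X_self, pderiv_X_of_ne (by decide),
    pderiv_X_of_ne (by decide)]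
  ring

lemma pd4 (f : MvPolynomial (Fin 3) ℂ) :
    pderiv 4 (typeDelta f) = X 0 * X 5 := by
  rw [typeDelta_eq, map_add, pderiv_rename_rho6_zero f 4 (fun j => rho6_ne j 4 (by decide)),
    pderiv_mul, pderiv_mul, pderiv_X_self, pderiv_X_of_ne (show (0:Fin 6) ≠ 4 by decide),
    pderiv_X_of_ne (show (5:Fin 6) ≠ 4 by decide)]
  ring

lemma pd5 (f : MvPolynomial (Fin 3) ℂ) :
    pderiv 5 (typeDelta f) = X 0 * X 4 := by
  rw [typeDelta_eq, map_add, pderiv_rename_rho6_zero f 5 (fun j => rho6_ne j 5 (by decide)),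
    pderiv_mul, pderiv_mul, pderiv_X_self, pderiv_X_of_ne (show (0:Fin 6) ≠ 5 by decide),
    pderiv_X_of_ne (show (4:Fin 6) ≠ 5 by decide)]
  ring

lemma pdrho (f : MvPolynomial (Fin 3) ℂ) (j : Fin 3) :
    pderiv (rho6 j) (typeDelta f) = rename rho6 (pderiv j f) := by
  have h045 : pderiv (rho6 j) (X 0 * X 4 * X 5 : MvPolynomial (Fin 6) ℂ) = 0 := by
    rw [pderiv_mul, pderiv_mul,
      pderiv_X_of_ne (Ne.symm (rho6_ne j 0 (by decide))),
      pderiv_X_of_ne (Ne.symm (rho6_ne j 4 (by decide))),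
      pderiv_X_of_ne (Ne.symm (rho6_ne j 5 (by decide)))]
    ring
  rw [typeDelta_eq, map_add, h045, pderiv_rename rho6_inj, zero_add]

lemma eval_typeDelta (f : MvPolynomial (Fin 3) ℂ) (p : Fin 6 → ℂ) :
    eval p (typeDelta f) = p 0 * p 4 * p 5 + eval (p ∘ rho6) f := by
  rw [typeDelta_eq, map_add, eval_rename]
  simp

lemma eval_zero_pderiv {f : MvPolynomial (Fin 3) ℂ} (hf : f.IsHomogeneous 3) (j : Fin 3) :
    eval (0 : Fin 3 → ℂ) (pderiv j f) = 0 := by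
  conv_lhs => rw [f.as_sum]
  rw [map_sum, map_sum]
  refine Finset.sum_eq_zero fun s hs => ?_
  rw [pderiv_monomial, eval_monomial]
  by_cases h : s j = 0
  · simp [h]
  · have hdeg : s.degree = 3 := by
      by_contra h'
      exact mem_support_iff.1 hs (hf.coeff_eq_zero h')
    have hle : Finsupp.single j 1 ≤ s :=
      Finsupp.single_le_iff.2 (Nat.one_le_iff_ne_zero.2 h)
    have hne : s - Finsupp.single j 1 ≠ 0 := by
      intro h0
      have hs' : s = Finsupp.single j 1 := by
        have := tsub_add_cancel_of_le hle
        rw [h0, zero_add] at this; exact this.symm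
      rw [hs'] at hdeg
      rw [Finsupp.degree_single] at hdeg
      omega
    obtain ⟨i, hi⟩ := Finsupp.ne_iff.1 hne
    rw [Finsupp.coe_zero, Pi.zero_apply] at hi
    have : ((s - Finsupp.single j 1).prod fun n e => (0 : Fin 3 → ℂ) n ^ e) = 0 := by
      apply Finset.prod_eq_zero (Finsupp.mem_support_iff.2 hi)
      exact zero_pow hi
    rw [this, mul_zero]

lemma eval_zero_cubic {f : MvPolynomial (Fin 3) ℂ} (hf : f.IsHomogeneous 3) :
    eval (0 : Fin 3 → ℂ) f = 0 := by
  rw [eval_zero]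
  exact hf.coeff_eq_zero (by simp [map_zero])

lemma deriv_eval_zero (f : MvPolynomial (Fin 3) ℂ) (hf : f.IsHomogeneous 3)
    (p : Fin 6 → ℂ) (h45 : p 4 * p 5 = 0) (h05 : p 0 * p 5 = 0) (h04 : p 0 * p 4 = 0)
    (hy : p ∘ rho6 = 0) : ∀ i : Fin 6, eval p (pderiv i (typeDelta f)) = 0 := by
  intro i
  by_cases hi0 : i = 0
  · subst hi0; rw [pd0]; simp only [eval_mul, eval_X]; exact h45
  by_cases hi4 : i = 4
  · subst hi4; rw [pd4]; simp only [eval_mul, eval_X]; exact h05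
  by_cases hi5 : i = 5
  · subst hi5; rw [pd5]; simp only [eval_mul, eval_X]; exact h04
  have hji : ∃ j : Fin 3, rho6 j = i := by
    have h0' : i.1 ≠ 0 := fun h => hi0 (Fin.ext h)
    have h4' : i.1 ≠ 4 := fun h => hi4 (Fin.ext h)
    have h5' : i.1 ≠ 5 := fun h => hi5 (Fin.ext h)
    have hlt := i.isLt
    refine ⟨⟨i.1 - 1, by omega⟩, Fin.ext ?_⟩
    simp only [rho6]
    omega
  obtain ⟨j, rfl⟩ := hji
  rw [pdrho, eval_rename, hy, eval_zero_pderiv hf]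

/-- If `f` defines a smooth plane cubic, then the singular points of
`g = x₀x₄x₅ + f(x₁,x₂,x₃)` are exactly the nonzero scalar multiples of the coordinate
vectors `e₀`, `e₄`, `e₅`: `g` has exactly three singular points in ℙ⁵, and these three
points are not collinear. -/
theorem typeDelta_three_singular_points (f : MvPolynomial (Fin 3) ℂ)
    (hf : f.IsHomogeneous 3)
    (hsm : ∀ y : Fin 3 → ℂ, (∀ i : Fin 3, eval y (pderiv i f) = 0) → y = 0) :
    (∀ p : Fin 6 → ℂ, p ≠ 0 →
      ((eval p (typeDelta f) = 0 ∧ ∀ i : Fin 6, eval p (pderiv i (typeDelta f)) = 0) ↔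
        ∃ c : ℂ, c ≠ 0 ∧
          (p = c • (![1, 0, 0, 0, 0, 0] : Fin 6 → ℂ) ∨
           p = c • (![0, 0, 0, 0, 1, 0] : Fin 6 → ℂ) ∨
           p = c • (![0, 0, 0, 0, 0, 1] : Fin 6 → ℂ)))) ∧
    LinearIndependent ℂ
      ![(![1, 0, 0, 0, 0, 0] : Fin 6 → ℂ), ![0, 0, 0, 0, 1, 0], ![0, 0, 0, 0, 0, 1]] := by
  constructor
  · intro p hp
    constructor
    · rintro ⟨he, hd⟩
      have h45 : p 4 * p 5 = 0 := by
        have := hd 0; rw [pd0] at this; simpa using this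
      have h05 : p 0 * p 5 = 0 := by
        have := hd 4; rw [pd4] at this; simpa using this
      have h04 : p 0 * p 4 = 0 := by
        have := hd 5; rw [pd5] at this; simpa using this
      have hy : p ∘ rho6 = 0 := by
        apply hsm
        intro j
        have := hd (rho6 j)
        rw [pdrho, eval_rename] at this
        exact this
      have h1 : p 1 = 0 := congrFun hy 0
      have h2 : p 2 = 0 := congrFun hy 1
      have h3 : p 3 = 0 := congrFun hy 2
      by_cases h0 : p 0 = 0
      · by_cases h4 : p 4 = 0
        · have h5 : p 5 ≠ 0 := by
            intro h5
            exact hp (funext fun i => by fin_cases i <;> assumption)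
          refine ⟨p 5, h5, Or.inr (Or.inr (funext fun i => ?_))⟩
          fin_cases i
          · exact h0.trans (smul_zero (p 5) : p 5 • (0:ℂ) = 0).symm
          · exact h1.trans (smul_zero (p 5) : p 5 • (0:ℂ) = 0).symm
          · exact h2.trans (smul_zero (p 5) : p 5 • (0:ℂ) = 0).symm
          · exact h3.trans (smul_zero (p 5) : p 5 • (0:ℂ) = 0).symm
          · exact h4.trans (smul_zero (p 5) : p 5 • (0:ℂ) = 0).symm
          · exact (mul_one (p 5)).symm
        · have h5 : p 5 = 0 := by
            rcases mul_eq_zero.1 h45 with h | h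
            · exact absurd h h4
            · exact h
          refine ⟨p 4, h4, Or.inr (Or.inl (funext fun i => ?_))⟩
          fin_cases i
          · exact h0.trans (smul_zero (p 4) : p 4 • (0:ℂ) = 0).symm
          · exact h1.trans (smul_zero (p 4) : p 4 • (0:ℂ) = 0).symm
          · exact h2.trans (smul_zero (p 4) : p 4 • (0:ℂ) = 0).symm
          · exact h3.trans (smul_zero (p 4) : p 4 • (0:ℂ) = 0).symm
          · exact (mul_one (p 4)).symm
          · exact h5.trans (smul_zero (p 4) : p 4 • (0:ℂ) = 0).symm
      · have h5 : p 5 = 0 := by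
          rcases mul_eq_zero.1 h05 with h | h
          · exact absurd h h0
          · exact h
        have h4 : p 4 = 0 := by
          rcases mul_eq_zero.1 h04 with h | h
          · exact absurd h h0
          · exact h
        refine ⟨p 0, h0, Or.inl (funext fun i => ?_)⟩
        fin_cases i
        · exact (mul_one (p 0)).symm
        · exact h1.trans (smul_zero (p 0) : p 0 • (0:ℂ) = 0).symm
        · exact h2.trans (smul_zero (p 0) : p 0 • (0:ℂ) = 0).symm
        · exact h3.trans (smul_zero (p 0) : p 0 • (0:ℂ) = 0).symm
        · exact h4.trans (smul_zero (p 0) : p 0 • (0:ℂ) = 0).symm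
        · exact h5.trans (smul_zero (p 0) : p 0 • (0:ℂ) = 0).symm
    · have key : ∀ v : Fin 6 → ℂ, v 4 * v 5 = 0 → v 0 * v 5 = 0 → v 0 * v 4 = 0 →
          v ∘ rho6 = 0 →
          eval v (typeDelta f) = 0 ∧ ∀ i : Fin 6, eval v (pderiv i (typeDelta f)) = 0 := by
        intro v h45 h05 h04 hy
        refine ⟨?_, deriv_eval_zero f hf v h45 h05 h04 hy⟩
        rw [eval_typeDelta, hy, eval_zero_cubic hf, mul_assoc, h45, mul_zero, add_zero]
      rintro ⟨c, hc, (rfl | rfl | rfl)⟩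
      · refine key _ ?_ ?_ ?_ ?_
        · exact mul_eq_zero_of_left (smul_zero c) _
        · exact mul_eq_zero_of_right _ (smul_zero c)
        · exact mul_eq_zero_of_right _ (smul_zero c)
        · funext j; fin_cases j <;> exact smul_zero c
      · refine key _ ?_ ?_ ?_ ?_
        · exact mul_eq_zero_of_right _ (smul_zero c)
        · exact mul_eq_zero_of_left (smul_zero c) _
        · exact mul_eq_zero_of_left (smul_zero c) _
        · funext j; fin_cases j <;> exact smul_zero c
      · refine key _ ?_ ?_ ?_ ?_
        · exact mul_eq_zero_of_left (smul_zero c) _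
        · exact mul_eq_zero_of_left (smul_zero c) _
        · exact mul_eq_zero_of_left (smul_zero c) _
        · funext j; fin_cases j <;> exact smul_zero c
  · rw [Fintype.linearIndependent_iff]
    intro g hg
    rw [Fin.sum_univ_three] at hg
    have h0' : g 0 * 1 + g 1 * 0 + g 2 * 0 = 0 := congrFun hg 0
    have h4' : g 0 * 0 + g 1 * 1 + g 2 * 0 = 0 := congrFun hg 4
    have h5' : g 0 * 0 + g 1 * 0 + g 2 * 1 = 0 := congrFun hg 5
    simp only [mul_one, mul_zero, add_zero, zero_add] at h0' h4' h5'
    intro i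
    fin_cases i
    · exact h0'
    · exact h4'
    · exact h5'
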